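/- Let X be a complex topological vector space, C a continuous linear operator on X with dense range, and (S(z))_{z ∈ ℂ} an entire C-regularized group of operators on X. If x ∈ X is a diskcyclic vector for the set {S(z) : z ∈ ℂ}, then C x is also a diskcyclic vector for {S(z) : z ∈ ℂ}. -/

import Mathlib

/-!
Taking `z = 0` in `S (z + w) ∘ C = S z ∘ S w` and using `S 0 = C` shows that `C` commutes with
every `S w`. Hence the disk orbit of `C x` is the image under `C` of the disk orbit of `x`, and a
continuous map with dense range sends dense sets to dense sets.
-/

section DiskOrbit

variable {𝕜 ι X : Type*} [Semiring 𝕜] [Norm 𝕜] [AddCommMonoid X] [Module 𝕜 X]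
  [TopologicalSpace X]

/-- `x` is a diskcyclic vector for `{S i}` iff this set is dense. -/
def diskOrbit (S : ι → X →L[𝕜] X) (x : X) : Set X :=
  {y | ∃ α : 𝕜, ‖α‖ ≤ 1 ∧ ∃ i, y = α • S i x}

theorem diskOrbit_map_of_comp_comm {S : ι → X →L[𝕜] X} {C : X →L[𝕜] X}
    (hcomm : ∀ i, S i ∘L C = C ∘L S i) (x : X) :
    diskOrbit S (C x) = C '' diskOrbit S x := by
  have happly (i : ι) : S i (C x) = C (S i x) := congrArg (· x) (hcomm i)
  ext y
  constructor
  · rintro ⟨α, hα, i, rfl⟩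
    exact ⟨α • S i x, ⟨α, hα, i, rfl⟩, by rw [map_smul, happly]⟩
  · rintro ⟨_, ⟨α, hα, i, rfl⟩, rfl⟩
    exact ⟨α, hα, i, by rw [map_smul, happly]⟩

theorem dense_diskOrbit_apply_of_comp_comm {S : ι → X →L[𝕜] X} {C : X →L[𝕜] X}
    (hC : DenseRange C) (hcomm : ∀ i, S i ∘L C = C ∘L S i) {x : X}
    (hx : Dense (diskOrbit S x)) : Dense (diskOrbit S (C x)) := by
  rw [diskOrbit_map_of_comp_comm hcomm]
  exact hC.dense_image C.continuous hx

end DiskOrbit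

theorem stmt_17_general {X : Type*} [AddCommGroup X] [Module ℂ X] [TopologicalSpace X]
    (C : X →L[ℂ] X) (hC : DenseRange ⇑C)
    (S : ℂ → X →L[ℂ] X)
    (hS0 : S 0 = C)
    (hSadd : ∀ z w : ℂ, S (z + w) ∘L C = S z ∘L S w)
    (x : X) (hx : Dense {y : X | ∃ α : ℂ, ‖α‖ ≤ 1 ∧ ∃ z : ℂ, y = α • S z x}) :
    Dense {y : X | ∃ α : ℂ, ‖α‖ ≤ 1 ∧ ∃ z : ℂ, y = α • S z (C x)} := by
  have hcomm (z : ℂ) : S z ∘L C = C ∘L S z := by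
    simpa only [zero_add, hS0] using hSadd 0 z
  exact dense_diskOrbit_apply_of_comp_comm hC hcomm hx

/-- If `(S z)_{z ∈ ℂ}` is an entire `C`-regularized group of operators on a complex
topological vector space, where `C` has dense range, then `C` maps every diskcyclic
vector of `{S z : z ∈ ℂ}` to a diskcyclic vector of `{S z : z ∈ ℂ}`. -/
theorem stmt_17 {X : Type*} [AddCommGroup X] [Module ℂ X] [TopologicalSpace X]
    [IsTopologicalAddGroup X] [ContinuousSMul ℂ X]
    (C : X →L[ℂ] X) (hC : DenseRange ⇑C)
    (S : ℂ → X →L[ℂ] X)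
    (hS0 : S 0 = C)
    (hSadd : ∀ z w : ℂ, S (z + w) ∘L C = S z ∘L S w)
    (hSent : ∀ (x : X) (f : X →L[ℂ] ℂ), Differentiable ℂ fun z : ℂ => f (S z x))
    (x : X) (hx : Dense {y : X | ∃ α : ℂ, ‖α‖ ≤ 1 ∧ ∃ z : ℂ, y = α • S z x}) :
    Dense {y : X | ∃ α : ℂ, ‖α‖ ≤ 1 ∧ ∃ z : ℂ, y = α • S z (C x)} :=
  stmt_17_general C hC S hS0 hSadd x hx
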